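/- If Υ + Υᵀ is positive semidefinite and Θ + Θᵀ is negative semidefinite, then there exists a C¹ matrix-valued function R₂ : [0,T] → ℝ^{n×n} solving the nonsymmetric Riccati terminal value problem (NR) on the entire interval [0,T]. -/

import Mathlib

/-!
Writing `S = R₂ᵀ + R₂`, (NR) says that `S` solves the symmetric Riccati equation
`S' = Υ + Υᵀ - Aᵀ S - S A - S σσᵀ S` with `S T = Θ + Θᵀ`; conversely a symmetric solution `S`
yields `R₂ t = Θ + ∫_T^t (Υ - S A - ½ S σσᵀ S)`. After reversing time, `N t = -S (T - t)` solves
a forward Riccati equation with positive semidefinite data, and `N = Y X⁻¹` for the linear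
Hamiltonian flow `(X, Y)` started at `(1, N 0)`. This flow keeps `Xᵀ Y` symmetric and makes
`t ↦ vᵀ Xᵀ Y v` nondecreasing. If `X t v = 0`, this quantity therefore vanishes on `[0, t]`, which
forces `σσᵀ Y v = 0` there, so `x = X v` solves `x' = -A x` with `x t = 0`, hence `v = x 0 = 0`.
So `X` stays invertible and the solution exists on all of `[0, T]`.
-/

open Matrix Set

attribute [local instance] Matrix.normedAddCommGroup Matrix.normedSpace

theorem eqOn_Icc_of_hasDerivAt_of_right_eq {E : Type*} [NormedAddCommGroup E] [NormedSpace ℝ E]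
    {f g f' : ℝ → E} {a b : ℝ} (hab : a ≤ b) (hf : ∀ t ∈ Icc a b, HasDerivAt f (f' t) t)
    (hg : ∀ t ∈ Icc a b, HasDerivAt g (f' t) t) (hfg : f b = g b) : EqOn f g (Icc a b) := by
  have hD : ∀ t ∈ Icc a b, HasDerivAt (fun t => f t - g t) 0 t := fun t ht =>
    ((hf t ht).sub (hg t ht)).congr_deriv (sub_self _)
  have hconst := constant_of_has_deriv_right_zero (HasDerivAt.continuousOn hD)
    fun t ht => (hD t (Ico_subset_Icc_self ht)).hasDerivWithinAt
  intro t ht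
  rw [← sub_eq_zero, hconst t ht, ← hconst b ⟨hab, le_rfl⟩, hfg, sub_self]

section EntrywiseCalculus

variable {m n : Type*} [Fintype n] {f : ℝ → Matrix m n ℝ} {f' : Matrix m n ℝ} {t : ℝ}

theorem hasDerivAt_matrix_iff :
    HasDerivAt f f' t ↔ ∀ i j, HasDerivAt (fun s => f s i j) (f' i j) t :=
  hasDerivAt_pi.trans (forall_congr' fun _ => hasDerivAt_pi)

theorem HasDerivAt.matrix_transpose [Fintype m] (h : HasDerivAt f f' t) :
    HasDerivAt (fun s => (f s)ᵀ) f'ᵀ t :=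
  hasDerivAt_matrix_iff.2 fun i j => hasDerivAt_matrix_iff.1 h j i

theorem HasDerivAt.matrix_toRows₁ {m' : Type*} {f : ℝ → Matrix (m ⊕ m') n ℝ}
    {f' : Matrix (m ⊕ m') n ℝ} (h : HasDerivAt f f' t) :
    HasDerivAt (fun s => (f s).toRows₁) f'.toRows₁ t :=
  hasDerivAt_matrix_iff.2 fun i j => hasDerivAt_matrix_iff.1 h (Sum.inl i) j

theorem HasDerivAt.matrix_toRows₂ {m' : Type*} {f : ℝ → Matrix (m' ⊕ m) n ℝ}
    {f' : Matrix (m' ⊕ m) n ℝ} (h : HasDerivAt f f' t) :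
    HasDerivAt (fun s => (f s).toRows₂) f'.toRows₂ t :=
  hasDerivAt_matrix_iff.2 fun i j => hasDerivAt_matrix_iff.1 h (Sum.inr i) j

theorem HasDerivAt.matrix_mul_const {p : Type*} [Fintype p] (h : HasDerivAt f f' t)
    (C : Matrix n p ℝ) : HasDerivAt (fun s => f s * C) (f' * C) t :=
  hasDerivAt_matrix_iff.2 fun i j => HasDerivAt.fun_sum fun k _ =>
    (hasDerivAt_matrix_iff.1 h i k).mul_const (C k j)

theorem HasDerivAt.matrix_mulVec (h : HasDerivAt f f' t) (v : n → ℝ) :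
    HasDerivAt (fun s => f s *ᵥ v) (f' *ᵥ v) t :=
  hasDerivAt_pi.2 fun i => HasDerivAt.fun_sum fun j _ =>
    (hasDerivAt_matrix_iff.1 h i j).mul_const (v j)

theorem HasDerivAt.dotProduct_mulVec [Fintype m] (h : HasDerivAt f f' t) (v : m → ℝ)
    (w : n → ℝ) : HasDerivAt (fun s => v ⬝ᵥ f s *ᵥ w) (v ⬝ᵥ f' *ᵥ w) t :=
  HasDerivAt.fun_sum fun i _ => (hasDerivAt_pi.1 (h.matrix_mulVec w) i).const_mul (v i)

end EntrywiseCalculus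

/- `HasDerivAt` only sees the topology of `Matrix n n ℝ`, which every matrix norm induces, so
these lemmas, proved with the submultiplicative `L∞` operator norm, hold verbatim for any other
choice of norm. -/
section OperatorNorm

variable {n : Type*} [Fintype n] [DecidableEq n] {f g : ℝ → Matrix n n ℝ} {f' g' : Matrix n n ℝ}
  {t : ℝ}

attribute [-instance] Matrix.normedAddCommGroup Matrix.normedSpace
attribute [local instance] Matrix.linftyOpNormedRing Matrix.linftyOpNormedAlgebra

theorem HasDerivAt.matrix_mul (hf : HasDerivAt f f' t) (hg : HasDerivAt g g' t) :
    HasDerivAt (fun s => f s * g s) (f' * g t + f t * g') t :=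
  hf.mul hg

theorem HasDerivAt.matrix_inv (hf : HasDerivAt f f' t) (hdet : IsUnit (f t).det) :
    HasDerivAt (fun s => (f s)⁻¹) (-((f t)⁻¹ * f' * (f t)⁻¹)) t := by
  obtain ⟨u, hu⟩ := (isUnit_iff_isUnit_det _).2 hdet
  have hinv := hasFDerivAt_ringInverse (𝕜 := ℝ) u
  rw [hu] at hinv
  replace hinv := hinv.comp_hasDerivAt t hf
  simp only [nonsing_inv_eq_ringInverse, ← hu, Ring.inverse_unit]
  rwa [_root_.neg_apply, ContinuousLinearMap.mulLeftRight_apply] at hinv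

theorem hasDerivAt_exp_smul (A : Matrix n n ℝ) (t : ℝ) :
    HasDerivAt (fun s : ℝ => NormedSpace.exp (s • A)) (A * NormedSpace.exp (t • A)) t :=
  hasDerivAt_exp_smul_const' A t

end OperatorNorm

section MatrixAlgebra

variable {ι : Type*} [Fintype ι]

theorem dotProduct_transpose_mul_mul_mulVec {m R : Type*} [Fintype m] [CommSemiring R]
    (M : Matrix m ι R) (N : Matrix m m R) (v : ι → R) :
    v ⬝ᵥ (Mᵀ * N * M) *ᵥ v = (M *ᵥ v) ⬝ᵥ N *ᵥ (M *ᵥ v) := by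
  rw [← mulVec_mulVec, ← mulVec_mulVec, dotProduct_mulVec, vecMul_transpose]

theorem isSymm_mul_inv_of_isSymm_transpose_mul [DecidableEq ι] {X Y : Matrix ι ι ℝ}
    (h : (Xᵀ * Y).IsSymm) (hX : IsUnit X.det) : (Y * X⁻¹).IsSymm := by
  have hXt : IsUnit Xᵀ.det := by rwa [det_transpose]
  have hYX : Yᵀ * X = Xᵀ * Y := by simpa [IsSymm, transpose_mul] using h.eq
  calc (Y * X⁻¹)ᵀ = (Xᵀ)⁻¹ * (Yᵀ * X) * X⁻¹ := by
        rw [transpose_mul, transpose_nonsing_inv, ← Matrix.mul_assoc,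
          mul_nonsing_inv_cancel_right _ _ hX]
    _ = Y * X⁻¹ := by rw [hYX, nonsing_inv_mul_cancel_left _ _ hXt]

theorem riccati_transpose_add_self {Υ A B M : Matrix ι ι ℝ} (hB : B.IsSymm)
    (hM : M.IsSymm) :
    (Υ - M * A - (1 / 2 : ℝ) • (M * B * M))ᵀ + (Υ - M * A - (1 / 2 : ℝ) • (M * B * M)) =
      Υ + Υᵀ - Aᵀ * M - M * A - M * B * M := by
  simp only [transpose_sub, transpose_smul, transpose_mul, hB.eq, hM.eq, Matrix.mul_assoc]
  module

end MatrixAlgebra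

section HamiltonianFlow

variable {ι : Type*} [Fintype ι] [DecidableEq ι] {A B P : Matrix ι ι ℝ} {X Y : ℝ → Matrix ι ι ℝ}

/-- The linear system whose solutions `(X, Y)` give the solutions `Y X⁻¹` of the Riccati equation
`N' = P + Aᵀ N + N A - N B N`. -/
structure IsHamiltonianFlow (A B P : Matrix ι ι ℝ) (X Y : ℝ → Matrix ι ι ℝ) : Prop where
  hasDerivAt_fst : ∀ t, HasDerivAt X (-A * X t + B * Y t) t
  hasDerivAt_snd : ∀ t, HasDerivAt Y (P * X t + Aᵀ * Y t) t

theorem IsHamiltonianFlow.hasDerivAt_mul_inv (hF : IsHamiltonianFlow A B P X Y) {t : ℝ}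
    (hX : IsUnit (X t).det) :
    HasDerivAt (fun s => Y s * (X s)⁻¹)
      (P + Aᵀ * (Y t * (X t)⁻¹) + Y t * (X t)⁻¹ * A - Y t * (X t)⁻¹ * B * (Y t * (X t)⁻¹)) t := by
  refine ((hF.hasDerivAt_snd t).matrix_mul ((hF.hasDerivAt_fst t).matrix_inv hX)).congr_deriv ?_
  have hXX : X t * (X t)⁻¹ = 1 := mul_nonsing_inv _ hX
  simp only [add_mul, mul_add, neg_mul, mul_neg, Matrix.mul_assoc, hXX, Matrix.mul_one]
  noncomm_ring

theorem IsHamiltonianFlow.hasDerivAt_transpose_mul (hF : IsHamiltonianFlow A B P X Y)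
    (hB : B.IsSymm) (t : ℝ) :
    HasDerivAt (fun s => (X s)ᵀ * Y s) ((Y t)ᵀ * B * Y t + (X t)ᵀ * P * X t) t := by
  refine ((hF.hasDerivAt_fst t).matrix_transpose.matrix_mul (hF.hasDerivAt_snd t)).congr_deriv ?_
  simp only [transpose_add, transpose_mul, transpose_neg, hB.eq]
  noncomm_ring

theorem IsHamiltonianFlow.isSymm_transpose_mul (hF : IsHamiltonianFlow A B P X Y)
    (hB : B.IsSymm) (hP : P.IsSymm) (h₀ : ((X 0)ᵀ * Y 0).IsSymm) (t : ℝ) :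
    ((X t)ᵀ * Y t).IsSymm := by
  have hD : ∀ s, HasDerivAt (fun s => (X s)ᵀ * Y s - ((X s)ᵀ * Y s)ᵀ) 0 s := fun s => by
    have hM := hF.hasDerivAt_transpose_mul hB s
    refine (hM.sub hM.matrix_transpose).congr_deriv ?_
    simp only [transpose_add, transpose_mul, hB.eq, hP.eq, transpose_transpose, Matrix.mul_assoc,
      sub_self]
  have hconst := is_const_of_deriv_eq_zero (fun s => (hD s).differentiableAt)
    (fun s => (hD s).deriv) t 0
  rw [h₀.eq, sub_self, sub_eq_zero] at hconst
  exact hconst.symm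

theorem IsHamiltonianFlow.hasDerivAt_dotProduct_mulVec (hF : IsHamiltonianFlow A B P X Y)
    (hB : B.IsSymm) (v : ι → ℝ) (t : ℝ) :
    HasDerivAt (fun s => v ⬝ᵥ ((X s)ᵀ * Y s) *ᵥ v)
      ((Y t *ᵥ v) ⬝ᵥ B *ᵥ (Y t *ᵥ v) + (X t *ᵥ v) ⬝ᵥ P *ᵥ (X t *ᵥ v)) t :=
  ((hF.hasDerivAt_transpose_mul hB t).dotProduct_mulVec v v).congr_deriv <| by
    rw [add_mulVec, dotProduct_add, dotProduct_transpose_mul_mul_mulVec,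
      dotProduct_transpose_mul_mul_mulVec]

/- `t ↦ vᵀ Xᵀ Y v` is nondecreasing, nonnegative at `0` and zero at `t₁`, hence zero on
`[0, t₁]`; so is its derivative, whose `B`-part then vanishes. -/
theorem IsHamiltonianFlow.mulVec_mulVec_eq_zero (hF : IsHamiltonianFlow A B P X Y)
    (hB : B.PosSemidef) (hP : P.PosSemidef) (hX₀ : X 0 = 1) (hY₀ : (Y 0).PosSemidef)
    {t₁ : ℝ} (ht₁ : 0 < t₁) {v : ι → ℝ} (hXv : X t₁ *ᵥ v = 0) :
    ∀ s ∈ Icc 0 t₁, B *ᵥ (Y s *ᵥ v) = 0 := by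
  have hform (M : Matrix ι ι ℝ) (w : ι → ℝ) (hM : M.PosSemidef) : 0 ≤ w ⬝ᵥ M *ᵥ w := by
    simpa using hM.dotProduct_mulVec_nonneg w
  set φ : ℝ → ℝ := fun s => v ⬝ᵥ ((X s)ᵀ * Y s) *ᵥ v
  have hφ := hF.hasDerivAt_dotProduct_mulVec (isHermitian_iff_isSymm.1 hB.isHermitian) v
  have hφ_mono : Monotone φ := monotone_of_deriv_nonneg (fun s => (hφ s).differentiableAt)
    fun s => (hφ s).deriv ▸ add_nonneg (hform _ _ hB) (hform _ _ hP)
  have hφ_zero : ∀ s ∈ Icc 0 t₁, φ s = 0 := by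
    have h₀ : 0 ≤ φ 0 := by simpa [φ, hX₀] using hform _ v hY₀
    have h₁ : φ t₁ = 0 := by
      show v ⬝ᵥ ((X t₁)ᵀ * Y t₁) *ᵥ v = 0
      rw [← mulVec_mulVec, dotProduct_mulVec, vecMul_transpose, hXv, zero_dotProduct]
    exact fun s hs => le_antisymm (h₁ ▸ hφ_mono hs.2) (h₀.trans (hφ_mono hs.1))
  intro s hs
  have hφ'_zero := (uniqueDiffOn_Icc ht₁ s hs).eq_deriv _ (hφ s).hasDerivWithinAt
    ((hasDerivWithinAt_const s _ 0).congr_of_mem hφ_zero hs)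
  rw [← hB.dotProduct_mulVec_zero_iff, star_trivial]
  linarith [hform _ (Y s *ᵥ v) hB, hform _ (X s *ᵥ v) hP]

theorem IsHamiltonianFlow.isUnit_det (hF : IsHamiltonianFlow A B P X Y) (hB : B.PosSemidef)
    (hP : P.PosSemidef) (hX₀ : X 0 = 1) (hY₀ : (Y 0).PosSemidef) {t₁ : ℝ} (ht₁ : 0 ≤ t₁) :
    IsUnit (X t₁).det := by
  rcases ht₁.eq_or_lt with rfl | ht₁
  · simp [hX₀]
  rw [isUnit_iff_ne_zero]
  intro hdet
  obtain ⟨v, hv, hXv⟩ := exists_mulVec_eq_zero_iff.2 hdet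
  have hBY := hF.mulVec_mulVec_eq_zero hB hP hX₀ hY₀ ht₁ hXv
  have hx : ∀ s ∈ Icc 0 t₁, HasDerivAt (fun s => X s *ᵥ v) (-A *ᵥ (X s *ᵥ v)) s := by
    intro s hs
    refine ((hF.hasDerivAt_fst s).matrix_mulVec v).congr_deriv ?_
    rw [add_mulVec, ← mulVec_mulVec, ← mulVec_mulVec, hBY s hs, add_zero]
  have hx_eq := ODE_solution_unique_of_mem_Icc_left (v := fun _ w => -A *ᵥ w) (s := fun _ => univ)
    (g := fun _ => 0) (fun _ _ => (mulVecLin (-A)).toContinuousLinearMap.lipschitz.lipschitzOnWith)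
    (HasDerivAt.continuousOn hx) (fun s hs => (hx s (Ioc_subset_Icc_self hs)).hasDerivWithinAt)
    (fun _ _ => mem_univ _) continuousOn_const
    (fun s _ => (hasDerivAt_const s (0 : ι → ℝ)).hasDerivWithinAt.congr_deriv (mulVec_zero _).symm)
    (fun _ _ => mem_univ _) hXv ⟨le_rfl, ht₁.le⟩
  exact hv (by simpa [hX₀] using hx_eq)

end HamiltonianFlow

section RiccatiSolution

variable {ι : Type*} [Fintype ι] [DecidableEq ι] {A B P : Matrix ι ι ℝ}

def hamiltonian (A B P : Matrix ι ι ℝ) : Matrix (ι ⊕ ι) (ι ⊕ ι) ℝ :=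
  fromBlocks (-A) B P Aᵀ

noncomputable def hamiltonianFlow (A B P N₀ : Matrix ι ι ℝ) (t : ℝ) : Matrix (ι ⊕ ι) ι ℝ :=
  NormedSpace.exp (t • hamiltonian A B P) * fromRows (1 : Matrix ι ι ℝ) N₀

theorem hamiltonianFlow_zero (A B P N₀ : Matrix ι ι ℝ) :
    hamiltonianFlow A B P N₀ 0 = fromRows 1 N₀ := by
  rw [hamiltonianFlow, zero_smul, NormedSpace.exp_zero, Matrix.one_mul]

theorem isHamiltonianFlow_hamiltonianFlow (A B P N₀ : Matrix ι ι ℝ) :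
    IsHamiltonianFlow A B P (fun t => (hamiltonianFlow A B P N₀ t).toRows₁)
      (fun t => (hamiltonianFlow A B P N₀ t).toRows₂) := by
  set Z := hamiltonianFlow A B P N₀
  have hZ (t : ℝ) : HasDerivAt Z (hamiltonian A B P * Z t) t := by
    refine ((hasDerivAt_exp_smul _ t).matrix_mul_const _).congr_deriv ?_
    rw [Matrix.mul_assoc]
    rfl
  have hHZ (t : ℝ) : hamiltonian A B P * Z t =
      fromRows (-A * (Z t).toRows₁ + B * (Z t).toRows₂) (P * (Z t).toRows₁ + Aᵀ * (Z t).toRows₂) := by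
    conv_lhs => rw [← fromRows_toRows (Z t)]
    rw [hamiltonian, fromBlocks_mul_fromRows]
  refine ⟨fun t => ?_, fun t => ?_⟩
  · simpa only [hHZ, toRows₁_fromRows] using (hZ t).matrix_toRows₁
  · simpa only [hHZ, toRows₂_fromRows] using (hZ t).matrix_toRows₂

theorem exists_riccati_solution {N₀ : Matrix ι ι ℝ} (hB : B.PosSemidef) (hP : P.PosSemidef)
    (hN₀ : N₀.PosSemidef) :
    ∃ N : ℝ → Matrix ι ι ℝ, N 0 = N₀ ∧ ∀ t, 0 ≤ t →
      (N t).IsSymm ∧ HasDerivAt N (P + Aᵀ * N t + N t * A - N t * B * N t) t := by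
  set X := fun t => (hamiltonianFlow A B P N₀ t).toRows₁
  set Y := fun t => (hamiltonianFlow A B P N₀ t).toRows₂
  have hF : IsHamiltonianFlow A B P X Y := isHamiltonianFlow_hamiltonianFlow A B P N₀
  have hX₀ : X 0 = 1 := by simp [X, hamiltonianFlow_zero]
  have hY₀ : Y 0 = N₀ := by simp [Y, hamiltonianFlow_zero]
  have hsymm (M : Matrix ι ι ℝ) (hM : M.PosSemidef) : M.IsSymm :=
    isHermitian_iff_isSymm.1 hM.isHermitian
  refine ⟨fun t => Y t * (X t)⁻¹, by simp [hX₀, hY₀], fun t ht => ?_⟩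
  have hdet := hF.isUnit_det hB hP hX₀ (hY₀ ▸ hN₀) ht
  refine ⟨isSymm_mul_inv_of_isSymm_transpose_mul ?_ hdet, hF.hasDerivAt_mul_inv hdet⟩
  exact hF.isSymm_transpose_mul (hsymm B hB) (hsymm P hP) (by simpa [hX₀, hY₀] using hsymm _ hN₀) t

theorem exists_riccati_terminal {S_T : Matrix ι ι ℝ} (hB : B.PosSemidef) (hP : P.PosSemidef)
    (hS_T : (-S_T).PosSemidef) (T : ℝ) :
    ∃ S : ℝ → Matrix ι ι ℝ, S T = S_T ∧ ∀ t ≤ T,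
      (S t).IsSymm ∧ HasDerivAt S (P - Aᵀ * S t - S t * A - S t * B * S t) t := by
  obtain ⟨N, hN₀, hN⟩ := exists_riccati_solution (A := A) hB hP hS_T
  refine ⟨fun t => -N (T - t), by simp [hN₀], fun t ht => ?_⟩
  obtain ⟨hsymm, hderiv⟩ := hN (T - t) (sub_nonneg.2 ht)
  refine ⟨hsymm.neg, ((hderiv.scomp t ((hasDerivAt_id t).const_sub T)).neg).congr_deriv ?_⟩
  simp only [neg_one_smul, neg_neg, mul_neg, neg_mul]
  abel

end RiccatiSolution

section Reduction

variable {ι : Type*} [Fintype ι] {A B : Matrix ι ι ℝ}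

theorem exists_nonsymm_riccati_of_symm {Υ Θ : Matrix ι ι ℝ} {T : ℝ} (hT : 0 ≤ T) (hB : B.IsSymm)
    {S : ℝ → Matrix ι ι ℝ}
    (hS : ∀ t ∈ Icc 0 T,
      (S t).IsSymm ∧ HasDerivAt S (Υ + Υᵀ - Aᵀ * S t - S t * A - S t * B * S t) t)
    (hS_T : S T = Θ + Θᵀ) :
    ∃ R : ℝ → Matrix ι ι ℝ, ContDiff ℝ 1 R ∧ R T = Θ ∧ ∀ t ∈ Icc 0 T,
      HasDerivAt R
        (Υ - ((R t)ᵀ + R t) * A - (1 / 2 : ℝ) • (((R t)ᵀ + R t) * B * ((R t)ᵀ + R t))) t := by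
  set g : Matrix ι ι ℝ → Matrix ι ι ℝ := fun M => Υ - M * A - (1 / 2 : ℝ) • (M * B * M)
  -- freezing `S` outside `[0, T]` makes the integrand continuous on all of `ℝ`
  set G : ℝ → Matrix ι ι ℝ := fun s => g (S (projIcc 0 T hT s))
  have hG : Continuous G := by
    have hg : Continuous g := by
      have hM : Continuous fun M : Matrix ι ι ℝ => M := continuous_id
      exact (continuous_const.sub (hM.matrix_mul continuous_const)).sub
        (((hM.matrix_mul continuous_const).matrix_mul hM).fun_const_smul _)
    have hS_cont : ContinuousOn S (Icc 0 T) := fun t ht =>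
      (hS t ht).2.continuousAt.continuousWithinAt
    exact hg.comp (hS_cont.comp_continuous (continuous_subtype_val.comp continuous_projIcc)
      fun s => (projIcc 0 T hT s).2)
  have hGS : ∀ t ∈ Icc 0 T, G t = g (S t) := fun t ht => by simp [G, projIcc_of_mem hT ht]
  set R : ℝ → Matrix ι ι ℝ := fun t => Θ + ∫ s in T..t, G s
  have hR : ∀ t, HasDerivAt R (G t) t := fun t =>
    (hG.integral_hasStrictDerivAt T t).hasDerivAt.const_add Θ
  have hRS : EqOn (fun t => (R t)ᵀ + R t) S (Icc 0 T) := by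
    refine eqOn_Icc_of_hasDerivAt_of_right_eq hT (fun t ht => ?_) (fun t ht => (hS t ht).2)
      (by simp [R, hS_T, add_comm])
    refine ((hR t).matrix_transpose.add (hR t)).congr_deriv ?_
    rw [hGS t ht, riccati_transpose_add_self hB (hS t ht).1]
  refine ⟨R, ?_, by simp [R], fun t ht => ?_⟩
  · rw [contDiff_one_iff_deriv]
    exact ⟨fun t => (hR t).differentiableAt, hG.congr fun t => (hR t).deriv.symm⟩
  · have h := hR t
    rw [hGS t ht, ← hRS ht] at h
    exact h

end Reduction

theorem statement4_general (n : ℕ) (T : ℝ) (hT : 0 < T)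
    (A σ Υ Θ : Matrix (Fin n) (Fin n) ℝ)
    (hΥ : (Υ + Υᵀ).PosSemidef) (hΘ : (-(Θ + Θᵀ)).PosSemidef) :
    ∃ R₂ : ℝ → Matrix (Fin n) (Fin n) ℝ,
      ContDiffOn ℝ 1 R₂ (Icc 0 T) ∧
      (∀ t ∈ Icc 0 T,
        derivWithin R₂ (Icc 0 T) t + ((R₂ t)ᵀ + R₂ t) * A
          + (1 / 2 : ℝ) • (((R₂ t)ᵀ + R₂ t) * (σ * σᵀ) * ((R₂ t)ᵀ + R₂ t)) - Υ = 0) ∧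
      R₂ T = Θ := by
  have hB : (σ * σᵀ).PosSemidef := by
    simpa using posSemidef_self_mul_conjTranspose σ
  obtain ⟨S, hS_T, hS⟩ := exists_riccati_terminal (A := A) hB hΥ hΘ T
  obtain ⟨R, hR_smooth, hR_T, hR⟩ := exists_nonsymm_riccati_of_symm hT.le
    (isHermitian_iff_isSymm.1 hB.isHermitian) (fun t ht => hS t ht.2) hS_T
  refine ⟨R, hR_smooth.contDiffOn, fun t ht => ?_, hR_T⟩
  have hR' : derivWithin R (Icc 0 T) t =
      Υ - ((R t)ᵀ + R t) * A - (1 / 2 : ℝ) • (((R t)ᵀ + R t) * (σ * σᵀ) * ((R t)ᵀ + R t)) :=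
    (hR t ht).hasDerivWithinAt.derivWithin (uniqueDiffOn_Icc hT t ht)
  rw [hR']
  abel

/-- If `Υ + Υᵀ` is positive semidefinite and `Θ + Θᵀ` is negative semidefinite
(expressed as `-(Θ + Θᵀ)` positive semidefinite), then the nonsymmetric Riccati terminal
value problem (NR) has a C¹ solution on all of `[0,T]`. -/
theorem statement4 (n : ℕ) (hn : 1 ≤ n) (T : ℝ) (hT : 0 < T)
    (A σ Υ Θ : Matrix (Fin n) (Fin n) ℝ)
    (hΥ : (Υ + Υᵀ).PosSemidef) (hΘ : (-(Θ + Θᵀ)).PosSemidef) :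
    ∃ R₂ : ℝ → Matrix (Fin n) (Fin n) ℝ,
      ContDiffOn ℝ 1 R₂ (Icc 0 T) ∧
      (∀ t ∈ Icc 0 T,
        derivWithin R₂ (Icc 0 T) t + ((R₂ t)ᵀ + R₂ t) * A
          + (1 / 2 : ℝ) • (((R₂ t)ᵀ + R₂ t) * (σ * σᵀ) * ((R₂ t)ᵀ + R₂ t)) - Υ = 0) ∧
      R₂ T = Θ :=
  statement4_general n T hT A σ Υ Θ hΥ hΘ
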